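/- arXiv:math/0610007 — 2 statements merged into one kernel-verified Lean document; each statement's English description precedes it below -/
import Mathlib

section
/- For every integer g ≥ 2 and every integer t ≥ 1, b_t = ((g+√(g²−1))^{t+1} − (g−√(g²−1))^{t+1})/(2√(g²−1)). -/
/-! Appending a letter to a word of length `t + 1` can be done in `2g` ways, except that a word
ending in `-1` cannot be followed by `1`; the words of length `t + 1` ending in `-1` are exactly
the words of length `t` followed by `-1`. Hence `b (t + 2) = 2g b (t + 1) - b t` with `b 0 = 1` and
`b 1 = 2g`, so `b t = U_t(g)` for the Chebyshev polynomial `U_t` of the second kind, and the closed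
form is the Binet formula for the roots `g ± √(g² - 1)` of `λ² - 2gλ + 1`. -/

/-- `I'_t(g)`: tuples `(i_1, …, i_t)` with entries in `{±1, …, ±g}` such that there is no
`j` with `(i_j, i_{j+1}) = (-1, 1)`. -/
noncomputable def Bset (g t : ℕ) : Finset (Fin t → ℤ) :=
  (Fintype.piFinset fun _ => ((Finset.Icc (-(g : ℤ)) (g : ℤ)).erase 0)).filter
    (fun v => ∀ j k : Fin t, (k : ℕ) = (j : ℕ) + 1 → ¬(v j = -1 ∧ v k = 1))

/-- `I_t(g)`: the tuples in `I'_t(g)` whose last entry is positive. -/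
noncomputable def Aset (g t : ℕ) : Finset (Fin t → ℤ) :=
  (Bset g t).filter (fun v => ∀ j : Fin t, (j : ℕ) = t - 1 → 0 < v j)

open Finset Polynomial

noncomputable def nonzeroIcc (g : ℕ) : Finset ℤ := (Icc (-(g : ℤ)) g).erase 0

lemma card_nonzeroIcc (g : ℕ) : #(nonzeroIcc g) = 2 * g := by
  rw [nonzeroIcc, card_erase_of_mem (by simp), Int.card_Icc]
  omega

lemma snoc_mem_Bset {g t : ℕ} {w : Fin t → ℤ} {x : ℤ} :
    Fin.snoc w x ∈ Bset g (t + 1) ↔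
      w ∈ Bset g t ∧ x ∈ nonzeroIcc g ∧
        ∀ j : Fin t, (j : ℕ) + 1 = t → ¬(w j = -1 ∧ x = 1) := by
  simp only [Bset, nonzeroIcc, mem_filter, Fintype.mem_piFinset, Fin.forall_fin_succ',
    Fin.snoc_castSucc, Fin.snoc_last, Fin.val_castSucc, Fin.val_last]
  have hval : ∀ i : Fin t, (i : ℕ) ≠ t + 1 := fun i => by omega
  simp only [hval, (Nat.succ_ne_self t).symm, false_imp_iff, imp_true_iff, forall_and, and_true,
    eq_comm (a := t)]
  tauto

lemma card_Bset_zero (g : ℕ) : #(Bset g 0) = 1 := by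
  rw [Bset, filter_true_of_mem fun v _ j => j.elim0]
  simp

lemma card_Bset_one (g : ℕ) : #(Bset g 1) = 2 * g := by
  rw [Bset, filter_true_of_mem fun v _ j k hk => by omega, Fintype.card_piFinset]
  simp only [prod_const, card_univ, Fintype.card_fin, pow_one]
  exact card_nonzeroIcc g

lemma card_Bset_filter_last_eq_neg_one {g : ℕ} (hg : 1 ≤ g) (t : ℕ) :
    #{v ∈ Bset g (t + 1) | v (Fin.last t) = -1} = #(Bset g t) := by
  refine card_bij' (fun v _ => Fin.init v) (fun w _ => Fin.snoc w (-1)) (fun v hv => ?_)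
    (fun w hw => ?_) (fun v hv => ?_) (fun w _ => Fin.init_snoc _ _)
  · rw [mem_filter, ← Fin.snoc_init_self v, snoc_mem_Bset] at hv
    exact hv.1.1
  · rw [mem_filter, snoc_mem_Bset, Fin.snoc_last]
    exact ⟨⟨hw, by simp [nonzeroIcc]; omega, by simp⟩, rfl⟩
  · rw [mem_filter] at hv
    simp [← hv.2]

lemma card_Bset_add_two_eq_sum (g t : ℕ) :
    #(Bset g (t + 2)) =
      ∑ w ∈ Bset g (t + 1), #{x ∈ nonzeroIcc g | ¬(w (Fin.last t) = -1 ∧ x = 1)} := by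
  rw [← card_sigma]
  refine card_bij' (fun v _ => ⟨Fin.init v, v (Fin.last _)⟩) (fun p _ => Fin.snoc p.1 p.2)
    (fun v hv => ?_) (fun p hp => ?_) (fun v _ => Fin.snoc_init_self v) (fun p _ => ?_)
  · rw [← Fin.snoc_init_self v, snoc_mem_Bset] at hv
    simp only [mem_sigma, mem_filter]
    exact ⟨hv.1, hv.2.1, hv.2.2 _ (by simp)⟩
  · simp only [mem_sigma, mem_filter] at hp
    rw [snoc_mem_Bset]
    refine ⟨hp.1, hp.2.1, fun j hj => ?_⟩
    obtain rfl : j = Fin.last t := Fin.ext (by simp; omega)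
    exact hp.2.2
  · simp

lemma card_filter_not_and_eq_one_add_ite {g : ℕ} (hg : 1 ≤ g) (P : Prop) [Decidable P] :
    #{x ∈ nonzeroIcc g | ¬(P ∧ x = 1)} + (if P then 1 else 0) = 2 * g := by
  split_ifs with hP
  · have h1 : (1 : ℤ) ∈ nonzeroIcc g := by simp [nonzeroIcc]; omega
    rw [filter_congr (q := (· ≠ 1)) (by simp [hP]), filter_ne', card_erase_add_one h1,
      card_nonzeroIcc]
  · rw [filter_true_of_mem (by simp [hP]), card_nonzeroIcc, add_zero]

lemma card_Bset_add_two_add_card_Bset {g : ℕ} (hg : 1 ≤ g) (t : ℕ) :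
    #(Bset g (t + 2)) + #(Bset g t) = 2 * g * #(Bset g (t + 1)) := by
  calc #(Bset g (t + 2)) + #(Bset g t)
      = #(Bset g (t + 2)) + #{w ∈ Bset g (t + 1) | w (Fin.last t) = -1} := by
        rw [card_Bset_filter_last_eq_neg_one hg]
    _ = ∑ w ∈ Bset g (t + 1), (#{x ∈ nonzeroIcc g | ¬(w (Fin.last t) = -1 ∧ x = 1)} +
          if w (Fin.last t) = -1 then 1 else 0) := by
        rw [card_Bset_add_two_eq_sum, card_filter, sum_add_distrib]
    _ = 2 * g * #(Bset g (t + 1)) := by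
        rw [sum_congr rfl fun w _ => card_filter_not_and_eq_one_add_ite hg _, sum_const,
          smul_eq_mul, mul_comm]

theorem Polynomial.Chebyshev.U_eval_mul_eq_pow_sub_pow {R : Type*} [CommRing R] {x s : R}
    (hs : s ^ 2 = x ^ 2 - 1) (n : ℕ) :
    (Chebyshev.U R n).eval x * (2 * s) = (x + s) ^ (n + 1) - (x - s) ^ (n + 1) := by
  induction n using Nat.twoStepInduction with
  | zero => simp only [Nat.cast_zero, Chebyshev.U_zero, eval_one]; ring
  | one => simp only [Nat.cast_one, Chebyshev.U_one, eval_mul, eval_ofNat, eval_X]; ring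
  | more n ih₀ ih₁ =>
    push_cast at ih₁ ⊢
    rw [Chebyshev.U_add_two, eval_sub, eval_mul, eval_mul, eval_ofNat, eval_X, sub_mul, mul_assoc,
      ih₁, ih₀]
    linear_combination ((x - s) ^ (n + 1) - (x + s) ^ (n + 1)) * hs

lemma card_Bset_eq_U_eval {g : ℕ} (hg : 1 ≤ g) (R : Type*) [CommRing R] (t : ℕ) :
    (#(Bset g t) : R) = (Chebyshev.U R t).eval (g : R) := by
  induction t using Nat.twoStepInduction with
  | zero => simp [card_Bset_zero]
  | one => simp [card_Bset_one]
  | more t ih₀ ih₁ =>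
    have h := congrArg (Nat.cast (R := R)) (card_Bset_add_two_add_card_Bset hg t)
    push_cast at h ih₁ ⊢
    rw [Chebyshev.U_add_two, eval_sub, eval_mul, eval_mul, eval_ofNat, eval_X, ← ih₁, ← ih₀]
    linear_combination h

theorem bset_card_closed_form_general (g : ℕ) (hg : 2 ≤ g) (t : ℕ) :
    ((Bset g t).card : ℝ) =
      (((g : ℝ) + Real.sqrt ((g : ℝ) ^ 2 - 1)) ^ (t + 1) -
        ((g : ℝ) - Real.sqrt ((g : ℝ) ^ 2 - 1)) ^ (t + 1)) /
        (2 * Real.sqrt ((g : ℝ) ^ 2 - 1)) := by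
  have hg' : (2 : ℝ) ≤ g := by exact_mod_cast hg
  have hpos : 0 < (g : ℝ) ^ 2 - 1 := by nlinarith
  rw [eq_div_iff (by positivity), card_Bset_eq_U_eval (by omega) ℝ]
  exact Chebyshev.U_eval_mul_eq_pow_sub_pow (Real.sq_sqrt hpos.le) t

/-- For  and ,
. -/
theorem bset_card_closed_form (g : ℕ) (hg : 2 ≤ g) (t : ℕ) (ht : 1 ≤ t) :
    ((Bset g t).card : ℝ) =
      (((g : ℝ) + Real.sqrt ((g : ℝ) ^ 2 - 1)) ^ (t + 1) -
        ((g : ℝ) - Real.sqrt ((g : ℝ) ^ 2 - 1)) ^ (t + 1)) /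
        (2 * Real.sqrt ((g : ℝ) ^ 2 - 1)) :=
  bset_card_closed_form_general g hg t
end

section
/- Let Γ be a subgroup of SL(2,ℝ), let 1 ≤ r ≤ t be integers, and let F, G : ℍ → ℂ be functions such that F|_2(γ_1−1)⋯(γ_r−1) = 0 for all γ_1,…,γ_r ∈ Γ and G|_0(δ_1−1)⋯(δ_{t−r+1}−1) = 0 for all δ_1,…,δ_{t−r+1} ∈ Γ. Then for all γ_1,…,γ_{t−1} ∈ Γ one has (F·G)|_2(γ_1−1)⋯(γ_{t−1}−1) = Σ_{(φ,ψ)} [F|_2(γ_{φ(1)}−1)⋯(γ_{φ(r−1)}−1)]·[G|_0(γ_{ψ(1)}−1)⋯(γ_{ψ(t−r)}−1)], where the sum runs over all shuffles (φ,ψ) of type (r,t). -/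
open UpperHalfPlane Matrix MatrixGroups Complex

/-- The weight `k` slash action of `SL(2, ℝ)` on functions `ℍ → ℂ`. -/
noncomputable def slashR (k : ℤ) (f : ℍ → ℂ) (γ : Matrix.SpecialLinearGroup (Fin 2) ℝ) :
    ℍ → ℂ :=
  fun z => f (γ • z) *
    (((γ : Matrix (Fin 2) (Fin 2) ℝ) 1 0 : ℂ) * (z : ℂ) +
      ((γ : Matrix (Fin 2) (Fin 2) ℝ) 1 1 : ℂ)) ^ (-k)

/-- `f ∣[k] (γ - 1) = f ∣[k] γ - f`. -/
noncomputable def slashDR (k : ℤ) (γ : Matrix.SpecialLinearGroup (Fin 2) ℝ) (f : ℍ → ℂ) :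
    ℍ → ℂ :=
  slashR k f γ - f

/-- Iterated application `f ∣[k] (γ₁ - 1) ⋯ (γₙ - 1)`. -/
noncomputable def slashDIterR (k : ℤ) {n : ℕ} (γ : Fin n → Matrix.SpecialLinearGroup (Fin 2) ℝ)
    (f : ℍ → ℂ) : ℍ → ℂ :=
  (List.ofFn γ).foldl (fun h g => slashDR k g h) f

/-- A shuffle of type `(r, t)`: a pair of strictly increasing maps
`φ : {1,…,r−1} → {1,…,t−1}` and `ψ : {1,…,t−r} → {1,…,t−1}` whose images are disjoint
and together cover `{1,…,t−1}`. -/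
def IsShuffle {r t : ℕ} (φ : Fin (r - 1) → Fin (t - 1)) (ψ : Fin (t - r) → Fin (t - 1)) :
    Prop :=
  (∀ a b, a < b → φ a < φ b) ∧ (∀ a b, a < b → ψ a < ψ b) ∧
    ∀ x : Fin (t - 1), (∃ a, φ a = x) ↔ ¬∃ b, ψ b = x

instance {r t : ℕ} :
    DecidablePred fun pq : (Fin (r - 1) → Fin (t - 1)) × (Fin (t - r) → Fin (t - 1)) =>
      IsShuffle pq.1 pq.2 := fun _ => by
  unfold IsShuffle; infer_instance

/-!
Slash operators of weights `k` and `l` multiply into the slash operator of weight `k + l`, so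
`(F G) ∣ (γ - 1) = (F ∣ (γ - 1)) (G ∣ (γ - 1)) + (F ∣ (γ - 1)) G + F (G ∣ (γ - 1))`.
Iterating this Leibniz rule, a product of a function killed by `a` differences and one killed by
`b` differences is killed by `a + b - 1` differences. Peeling off `γ₁`, the first term of the rule
is therefore killed by the remaining `t - 2` differences, while by induction the second and third
terms produce the shuffles sending `1` to the `F`-side and to the `G`-side respectively.
-/

section SlashOperators

variable {k l : ℤ}

theorem slashR_mul (F G : ℍ → ℂ) (g : SL(2, ℝ)) :
    slashR (k + l) (F * G) g = slashR k F g * slashR l G g := by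
  funext z
  have hz : ((g 1 0 : ℝ) : ℂ) * z + (g 1 1 : ℝ) ≠ 0 := denom_ne_zero (g : GL (Fin 2) ℝ) z
  simp only [slashR, Pi.mul_apply, neg_add, zpow_add₀ hz]
  ring

theorem slashDR_mul (g : SL(2, ℝ)) (F G : ℍ → ℂ) :
    slashDR (k + l) g (F * G) =
      slashDR k g F * slashDR l g G + slashDR k g F * G + F * slashDR l g G := by
  simp only [slashDR, slashR_mul]
  ring

theorem slashDR_add (g : SL(2, ℝ)) (f₁ f₂ : ℍ → ℂ) :
    slashDR k g (f₁ + f₂) = slashDR k g f₁ + slashDR k g f₂ := by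
  funext z
  simp only [slashDR, slashR, Pi.add_apply, Pi.sub_apply]
  ring

theorem slashDR_zero (g : SL(2, ℝ)) : slashDR k g 0 = 0 := by
  funext z
  simp [slashDR, slashR]

theorem slashDIterR_succ {n : ℕ} (γ : Fin (n + 1) → SL(2, ℝ)) (f : ℍ → ℂ) :
    slashDIterR k γ f = slashDIterR k (Fin.tail γ) (slashDR k (γ 0) f) := by
  rw [slashDIterR, List.ofFn_succ, List.foldl_cons]
  rfl

theorem slashDIterR_cons {n : ℕ} (g : SL(2, ℝ)) (γ : Fin n → SL(2, ℝ)) (f : ℍ → ℂ) :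
    slashDIterR k (Fin.cons g γ) f = slashDIterR k γ (slashDR k g f) := by
  rw [slashDIterR_succ, Fin.tail_cons, Fin.cons_zero]

theorem slashDIterR_add : ∀ {n : ℕ} (γ : Fin n → SL(2, ℝ)) (f₁ f₂ : ℍ → ℂ),
    slashDIterR k γ (f₁ + f₂) = slashDIterR k γ f₁ + slashDIterR k γ f₂
  | 0, _, _, _ => rfl
  | _ + 1, γ, f₁, f₂ => by
    rw [slashDIterR_succ, slashDR_add, slashDIterR_add, ← slashDIterR_succ, ← slashDIterR_succ]

theorem slashDIterR_zero : ∀ {n : ℕ} (γ : Fin n → SL(2, ℝ)), slashDIterR k γ 0 = 0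
  | 0, _ => rfl
  | _ + 1, γ => by rw [slashDIterR_succ, slashDR_zero, slashDIterR_zero]

theorem slashDIterR_comp_cons_zero_succ {m n : ℕ} (γ : Fin (n + 1) → SL(2, ℝ))
    (φ : Fin m → Fin n) (f : ℍ → ℂ) :
    slashDIterR k (γ ∘ Fin.cons 0 (Fin.succ ∘ φ)) f =
      slashDIterR k (Fin.tail γ ∘ φ) (slashDR k (γ 0) f) := by
  rw [Fin.comp_cons, slashDIterR_cons]
  rfl

end SlashOperators

section Shuffles

variable {a b m n : ℕ}

theorem Fin.strictMono_succ_comp_iff {α : Type*} [Preorder α] {f : α → Fin n} :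
    StrictMono (Fin.succ ∘ f) ↔ StrictMono f := by
  simp [StrictMono]

theorem Fin.exists_succ_comp_eq {f : Fin m → Fin (n + 1)} (hf : ∀ i, f i ≠ 0) :
    ∃ g, Fin.succ ∘ g = f := by
  choose g hg using fun i => Fin.exists_succ_eq.2 (hf i)
  exact ⟨g, funext hg⟩

def Fin.IsShuffle (φ : Fin a → Fin n) (ψ : Fin b → Fin n) : Prop :=
  StrictMono φ ∧ StrictMono ψ ∧ ∀ x, x ∈ Set.range φ ↔ x ∉ Set.range ψ

instance {φ : Fin a → Fin n} {ψ : Fin b → Fin n} : Decidable (Fin.IsShuffle φ ψ) := by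
  unfold Fin.IsShuffle StrictMono
  infer_instance

theorem Fin.IsShuffle.symm {φ : Fin a → Fin n} {ψ : Fin b → Fin n} (h : IsShuffle φ ψ) :
    IsShuffle ψ φ :=
  ⟨h.2.1, h.1, fun x => iff_not_comm.1 (h.2.2 x)⟩

theorem Fin.isShuffle_cons_zero_succ_iff {φ : Fin a → Fin n} {ψ : Fin b → Fin n} :
    IsShuffle (Fin.cons 0 (Fin.succ ∘ φ) : Fin (a + 1) → Fin (n + 1)) (Fin.succ ∘ ψ) ↔
      IsShuffle φ ψ := by
  simp [IsShuffle, Fin.strictMono_cons, Fin.forall_fin_succ, Fin.succ_pos, Fin.succ_ne_zero,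
    Fin.strictMono_succ_comp_iff]

abbrev Fin.Shuffle (a b n : ℕ) : Type :=
  {p : (Fin a → Fin n) × (Fin b → Fin n) // IsShuffle p.1 p.2}

namespace Fin.Shuffle

def empty : Shuffle 0 0 0 :=
  ⟨(Fin.elim0, Fin.elim0), Subsingleton.strictMono _, Subsingleton.strictMono _, fun x => x.elim0⟩

def swap : Shuffle a b n ≃ Shuffle b a n where
  toFun p := ⟨p.1.swap, p.2.symm⟩
  invFun p := ⟨p.1.swap, p.2.symm⟩
  left_inv _ := rfl
  right_inv _ := rfl

@[simp] theorem swap_swap (p : Shuffle a b n) : swap (swap p) = p := rfl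

def consLeft (p : Shuffle a b n) : Shuffle (a + 1) b (n + 1) :=
  ⟨(Fin.cons 0 (Fin.succ ∘ p.1.1), Fin.succ ∘ p.1.2), isShuffle_cons_zero_succ_iff.2 p.2⟩

def consRight (p : Shuffle a b n) : Shuffle a (b + 1) (n + 1) :=
  swap (consLeft (swap p))

@[simp] theorem consLeft_val (p : Shuffle a b n) :
    (consLeft p).1 = (Fin.cons 0 (Fin.succ ∘ p.1.1), Fin.succ ∘ p.1.2) := rfl

@[simp] theorem consRight_val (p : Shuffle a b n) :
    (consRight p).1 = (Fin.succ ∘ p.1.1, Fin.cons 0 (Fin.succ ∘ p.1.2)) := rfl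

theorem consLeft_injective : Function.Injective (consLeft : Shuffle a b n → _) := by
  intro p q h
  have h' := congrArg Subtype.val h
  simp only [consLeft_val, Prod.mk.injEq, Fin.cons_inj, true_and,
    (Fin.succ_injective _).comp_left.eq_iff] at h'
  exact Subtype.ext (Prod.ext h'.1 h'.2)

theorem consRight_injective : Function.Injective (consRight : Shuffle a b n → _) :=
  swap.injective.comp (consLeft_injective.comp swap.injective)

theorem consLeft_ne_consRight (q : Shuffle a (b + 1) n) (q' : Shuffle (a + 1) b n) :
    consLeft q ≠ consRight q' := fun h =>
  Fin.succ_ne_zero _ (congrArg (fun p => p.1.1 0) h).symm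

theorem zero_mem_range_or (p : Shuffle a b (n + 1)) :
    0 ∈ Set.range p.1.1 ∨ 0 ∈ Set.range p.1.2 :=
  or_iff_not_imp_right.2 (p.2.2.2 0).2

theorem exists_consLeft_eq (p : Shuffle (a + 1) b (n + 1)) (h : 0 ∈ Set.range p.1.1) :
    ∃ q, consLeft q = p := by
  obtain ⟨⟨φ, ψ⟩, hp⟩ := p
  obtain ⟨i, hi⟩ := h
  have hφ0 : φ 0 = 0 := le_antisymm (hi ▸ hp.1.monotone (Fin.zero_le i)) (Fin.zero_le _)
  obtain ⟨φ', hφ'⟩ := Fin.exists_succ_comp_eq (f := Fin.tail φ) fun i =>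
    ((Fin.zero_le _).trans_lt (hp.1 i.succ_pos)).ne'
  obtain ⟨ψ', rfl⟩ := Fin.exists_succ_comp_eq fun j hj => (hp.2.2 0).1 ⟨0, hφ0⟩ ⟨j, hj⟩
  obtain rfl : φ = Fin.cons 0 (Fin.succ ∘ φ') := by rw [hφ', ← hφ0, Fin.cons_self_tail]
  exact ⟨⟨(φ', ψ'), isShuffle_cons_zero_succ_iff.1 hp⟩, rfl⟩

theorem exists_consRight_eq (p : Shuffle a (b + 1) (n + 1)) (h : 0 ∈ Set.range p.1.2) :
    ∃ q, consRight q = p := by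
  obtain ⟨q, hq⟩ := exists_consLeft_eq (swap p) h
  exact ⟨swap q, by rw [consRight, swap_swap, hq, swap_swap]⟩

variable {M : Type*} [AddCommMonoid M]

theorem sum_succ_succ (f : Shuffle (a + 1) (b + 1) (n + 1) → M) :
    ∑ p, f p = ∑ q, f (consLeft q) + ∑ q, f (consRight q) := by
  have hbij : Function.Bijective (Sum.elim consLeft consRight :
      Shuffle a (b + 1) n ⊕ Shuffle (a + 1) b n → _) := by
    refine ⟨consLeft_injective.sumElim consRight_injective consLeft_ne_consRight, fun p => ?_⟩
    rcases zero_mem_range_or p with h | h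
    · obtain ⟨q, hq⟩ := exists_consLeft_eq p h
      exact ⟨.inl q, hq⟩
    · obtain ⟨q, hq⟩ := exists_consRight_eq p h
      exact ⟨.inr q, hq⟩
  rw [← Fintype.sum_bijective _ hbij _ _ fun _ => rfl, Fintype.sum_sum_type]
  rfl

theorem sum_zero_succ (f : Shuffle 0 (b + 1) (n + 1) → M) :
    ∑ p, f p = ∑ q, f (consRight q) :=
  (Fintype.sum_bijective _ ⟨consRight_injective, fun p => exists_consRight_eq p
    ((zero_mem_range_or p).resolve_left fun ⟨i, _⟩ => i.elim0)⟩ _ _ fun _ => rfl).symm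

theorem sum_succ_zero (f : Shuffle (a + 1) 0 (n + 1) → M) :
    ∑ p, f p = ∑ q, f (consLeft q) :=
  (Fintype.sum_bijective _ ⟨consLeft_injective, fun p => exists_consLeft_eq p
    ((zero_mem_range_or p).resolve_right fun ⟨i, _⟩ => i.elim0)⟩ _ _ fun _ => rfl).symm

end Fin.Shuffle

end Shuffles

section Annihilation

variable {k l : ℤ} {S : Set SL(2, ℝ)}

def SlashAnnihilated (k : ℤ) (S : Set SL(2, ℝ)) (n : ℕ) (F : ℍ → ℂ) : Prop :=
  ∀ γ : Fin n → SL(2, ℝ), (∀ j, γ j ∈ S) → slashDIterR k γ F = 0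

theorem SlashAnnihilated.eq_zero {F : ℍ → ℂ} (h : SlashAnnihilated k S 0 F) : F = 0 :=
  h Fin.elim0 fun j => j.elim0

theorem slashAnnihilated_zero (n : ℕ) : SlashAnnihilated k S n 0 :=
  fun γ _ => slashDIterR_zero γ

theorem SlashAnnihilated.slashDR {n : ℕ} {F : ℍ → ℂ} {g : SL(2, ℝ)}
    (h : SlashAnnihilated k S (n + 1) F) (hg : g ∈ S) :
    SlashAnnihilated k S n (slashDR k g F) := fun δ hδ => by
  rw [← slashDIterR_cons]
  exact h _ (Fin.cases hg hδ)

theorem SlashAnnihilated.mul : ∀ {m a b : ℕ} {F G : ℍ → ℂ},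
    SlashAnnihilated k S a F → SlashAnnihilated l S b G → a + b ≤ m + 1 →
      SlashAnnihilated (k + l) S m (F * G)
  | _, 0, _, _, _, hF, _, _ => by rw [hF.eq_zero, zero_mul]; exact slashAnnihilated_zero _
  | _, _ + 1, 0, _, _, _, hG, _ => by rw [hG.eq_zero, mul_zero]; exact slashAnnihilated_zero _
  | 0, _ + 1, _ + 1, _, _, _, _, h => by omega
  | _ + 1, _ + 1, _ + 1, _, _, hF, hG, h => fun γ hγ => by
    have hγ' : ∀ j, Fin.tail γ j ∈ S := fun j => hγ j.succ
    have hF' := hF.slashDR (hγ 0)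
    have hG' := hG.slashDR (hγ 0)
    rw [slashDIterR_succ, slashDR_mul, slashDIterR_add, slashDIterR_add,
      hF'.mul hG' (by omega) _ hγ', hF'.mul hG (by omega) _ hγ', hF.mul hG' (by omega) _ hγ',
      zero_add, zero_add]

theorem slashDIterR_mul_eq_sum_shuffle : ∀ {n a b : ℕ} {F G : ℍ → ℂ},
    SlashAnnihilated k S (a + 1) F → SlashAnnihilated l S (b + 1) G → a + b = n →
      ∀ γ : Fin n → SL(2, ℝ), (∀ j, γ j ∈ S) →
        slashDIterR (k + l) γ (F * G) = fun z => ∑ p : Fin.Shuffle a b n,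
          slashDIterR k (γ ∘ p.1.1) F z * slashDIterR l (γ ∘ p.1.2) G z
  | 0, a, b, F, G, _, _, hn, γ, _ => by
    obtain ⟨rfl, rfl⟩ : a = 0 ∧ b = 0 := by omega
    funext z
    rw [Fintype.sum_subsingleton _ Fin.Shuffle.empty]
    rfl
  | n + 1, a, b, F, G, hF, hG, hn, γ, hγ => by
    have hγ' : ∀ j, Fin.tail γ j ∈ S := fun j => hγ j.succ
    have hF' := hF.slashDR (hγ 0)
    have hG' := hG.slashDR (hγ 0)
    rw [slashDIterR_succ, slashDR_mul, slashDIterR_add, slashDIterR_add,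
      hF'.mul hG' (by omega) _ hγ', zero_add]
    rcases a with _ | a <;> rcases b with _ | b
    · omega
    · rw [hF'.eq_zero, zero_mul, slashDIterR_zero, zero_add,
        slashDIterR_mul_eq_sum_shuffle hF hG' (by omega) _ hγ']
      funext z
      rw [Fin.Shuffle.sum_zero_succ]
      simp only [Fin.Shuffle.consRight_val, slashDIterR_comp_cons_zero_succ]
      rfl
    · rw [hG'.eq_zero, mul_zero, slashDIterR_zero, add_zero,
        slashDIterR_mul_eq_sum_shuffle hF' hG (by omega) _ hγ']
      funext z
      rw [Fin.Shuffle.sum_succ_zero]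
      simp only [Fin.Shuffle.consLeft_val, slashDIterR_comp_cons_zero_succ]
      rfl
    · rw [slashDIterR_mul_eq_sum_shuffle hF' hG (by omega) _ hγ',
        slashDIterR_mul_eq_sum_shuffle hF hG' (by omega) _ hγ']
      funext z
      rw [Fin.Shuffle.sum_succ_succ]
      simp only [Fin.Shuffle.consLeft_val, Fin.Shuffle.consRight_val,
        slashDIterR_comp_cons_zero_succ]
      rfl

end Annihilation

/-- If `F` is annihilated by all products `(γ₁−1)⋯(γ_r−1)` in weight 2 and `G` is annihilated
by all products `(δ₁−1)⋯(δ_{t−r+1}−1)` in weight 0 (with group elements from `Γ`), then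
`(F·G) ∣[2] (γ₁−1)⋯(γ_{t−1}−1)` is the shuffle sum
`Σ_{(φ,ψ)} (F ∣[2] (γ_{φ(1)}−1)⋯(γ_{φ(r−1)}−1)) · (G ∣[0] (γ_{ψ(1)}−1)⋯(γ_{ψ(t−r)}−1))`. -/
theorem product_slash_shuffle (Γ : Subgroup (Matrix.SpecialLinearGroup (Fin 2) ℝ))
    (r t : ℕ) (hr : 1 ≤ r) (hrt : r ≤ t) (F G : ℍ → ℂ)
    (hF : ∀ γ : Fin r → Matrix.SpecialLinearGroup (Fin 2) ℝ,
      (∀ j, γ j ∈ Γ) → slashDIterR 2 γ F = 0)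
    (hG : ∀ δ : Fin (t - r + 1) → Matrix.SpecialLinearGroup (Fin 2) ℝ,
      (∀ j, δ j ∈ Γ) → slashDIterR 0 δ G = 0)
    (γ : Fin (t - 1) → Matrix.SpecialLinearGroup (Fin 2) ℝ) (hγ : ∀ j, γ j ∈ Γ) :
    slashDIterR 2 γ (F * G) = fun z =>
      ∑ p : {pq : (Fin (r - 1) → Fin (t - 1)) × (Fin (t - r) → Fin (t - 1)) //
          IsShuffle pq.1 pq.2},
        slashDIterR 2 (fun a => γ (p.1.1 a)) F z *
          slashDIterR 0 (fun b => γ (p.1.2 b)) G z := by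
  have hF' : SlashAnnihilated 2 Γ (r - 1 + 1) F := by rw [Nat.sub_add_cancel hr]; exact hF
  have h := slashDIterR_mul_eq_sum_shuffle hF' hG (by omega) γ hγ
  rw [add_zero] at h
  rw [h]
  funext z
  refine Fintype.sum_equiv (.subtypeEquivRight fun _ => ?_) _ _ fun _ => rfl
  exact Iff.rfl
end
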